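/- Suppose x₀,₀ ∈ ℝⁿ satisfies F(x₀,₀) ≤ 0 entrywise, 0 ≤ x₀,₀ entrywise, and eᵀx₀,₀ ≤ 1. Then all iterates x_{i,s} of the modified Newton algorithm are well defined (each matrix F'_{x_{i,0}} is invertible), and every iterate x_{i,s} satisfies F(x_{i,s}) ≤ 0 entrywise, 0 ≤ x_{i,s} entrywise, eᵀx_{i,s} ≤ 1, and x_{i,s−1} ≤ x_{i,s} entrywise for all i ≥ 0 and 1 ≤ s ≤ n_i; in particular the outer sequence x_k := x_{k,0} is entrywise monotonically increasing. -/

import Mathlib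

open Matrix BigOperators Finset Filter

noncomputable section

/-- Kronecker product of two vectors: `(u ⊗ w)_{(i,j)} = u_i w_j`. -/
def kron {n : ℕ} (u w : Fin n → ℝ) : Fin n × Fin n → ℝ := fun p => u p.1 * w p.2

/-- `u ⊗ I` : the `n² × n` Kronecker product of a vector with the identity,
so that `(u ⊗ I) w = u ⊗ w`. -/
def kronVecId {n : ℕ} (u : Fin n → ℝ) : Matrix (Fin n × Fin n) (Fin n) ℝ :=
  Matrix.of fun p k => u p.1 * (if p.2 = k then (1 : ℝ) else 0)

/-- `I ⊗ u` : the `n² × n` Kronecker product of the identity with a vector,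
so that `(I ⊗ u) w = w ⊗ u`. -/
def idKronVec {n : ℕ} (u : Fin n → ℝ) : Matrix (Fin n × Fin n) (Fin n) ℝ :=
  Matrix.of fun p k => (if p.1 = k then (1 : ℝ) else 0) * u p.2

/-- `F(x) = x − α R (x ⊗ x) − (1 − α) v`. -/
def Fmap {n : ℕ} (α : ℝ) (R : Matrix (Fin n) (Fin n × Fin n) ℝ) (v : Fin n → ℝ)
    (x : Fin n → ℝ) : Fin n → ℝ :=
  x - α • R.mulVec (kron x x) - (1 - α) • v

/-- `F'ₓ = I − α R (x ⊗ I + I ⊗ x)`. -/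
def Fprime {n : ℕ} (α : ℝ) (R : Matrix (Fin n) (Fin n × Fin n) ℝ)
    (x : Fin n → ℝ) : Matrix (Fin n) (Fin n) ℝ :=
  1 - α • (R * (kronVecId x + idKronVec x))

/-- One step of the modified Newton iteration with the derivative frozen at `b`. -/
def mnStep {n : ℕ} (α : ℝ) (R : Matrix (Fin n) (Fin n × Fin n) ℝ) (v : Fin n → ℝ)
    (b : Fin n → ℝ) (w : Fin n → ℝ) : Fin n → ℝ :=
  w - (Fprime α R b)⁻¹.mulVec (Fmap α R v w)

/-- The outer sequence of the modified Newton algorithm: `mnOuter … i = x_{i,0}`,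
where `x_{i+1,0} = x_{i,nᵢ}` is obtained by applying `nᵢ` frozen Newton steps to `x_{i,0}`. -/
def mnOuter {n : ℕ} (α : ℝ) (R : Matrix (Fin n) (Fin n × Fin n) ℝ) (v : Fin n → ℝ)
    (ni : ℕ → ℕ) (x0 : Fin n → ℝ) : ℕ → (Fin n → ℝ)
  | 0 => x0
  | (i + 1) => (mnStep α R v (mnOuter α R v ni x0 i))^[ni i] (mnOuter α R v ni x0 i)

/-- The inner iterates of the modified Newton algorithm: `mnIter … i s = x_{i,s}`. -/
def mnIter {n : ℕ} (α : ℝ) (R : Matrix (Fin n) (Fin n × Fin n) ℝ) (v : Fin n → ℝ)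
    (ni : ℕ → ℕ) (x0 : Fin n → ℝ) (i s : ℕ) : Fin n → ℝ :=
  (mnStep α R v (mnOuter α R v ni x0 i))^[s] (mnOuter α R v ni x0 i)


/-!
Write `F'_b = 1 - α J_b` with `J_b = R (b ⊗ I + I ⊗ b)`. For `0 ≤ b` and `eᵀ b ≤ 1` the matrix
`α J_b` is nonnegative with column sums `2 α eᵀ b < 1`, so its Neumann series converges and
`(F'_b)⁻¹ ≥ 0`. Hence a step `d = -(F'_b)⁻¹ F(x)` from a point with `F(x) ≤ 0` is nonnegative.
Expanding the quadratic `F` gives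
`F(x + d) = -α R ((x - b) ⊗ d + d ⊗ (x - b) + d ⊗ d) ≤ 0` as long as `b ≤ x`, and summing the
entries of `F'_b d = -F(x)` with column-stochastic `R` gives
`(1 - 2α eᵀb) eᵀd = (1 - eᵀx)(1 - α(1 + eᵀx)) ≤ (1 - 2α eᵀb)(1 - eᵀx)`, so `eᵀ(x + d) ≤ 1`.
These invariants propagate along the inner and outer loops by induction.
-/

namespace Matrix

variable {ι κ : Type*} [Fintype κ]

lemma mulVec_nonneg {A : Matrix ι κ ℝ} (hA : ∀ i j, 0 ≤ A i j) {y : κ → ℝ} (hy : 0 ≤ y) :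
    0 ≤ A *ᵥ y :=
  fun i => sum_nonneg fun j _ => mul_nonneg (hA i j) (hy j)

variable [Fintype ι]

lemma sum_mulVec_of_sum_col_eq_one {A : Matrix ι κ ℝ} (hA : ∀ j, ∑ i, A i j = 1)
    (y : κ → ℝ) : ∑ i, (A *ᵥ y) i = ∑ j, y j := by
  simp only [mulVec, dotProduct]
  rw [sum_comm]
  simp [← sum_mul, hA]

lemma sum_mul_apply_of_sum_col_eq_one {A : Matrix ι κ ℝ} (hA : ∀ j, ∑ i, A i j = 1)
    {μ : Type*} (B : Matrix κ μ ℝ) (k : μ) : ∑ i, (A * B) i k = ∑ j, B j k := by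
  simp only [mul_apply]
  rw [sum_comm]
  simp [← sum_mul, hA]

variable [DecidableEq ι]

lemma summable_pow_of_sum_col_lt_one {M : Matrix ι ι ℝ} (hM : ∀ i j, 0 ≤ M i j)
    (hcol : ∀ j, ∑ i, M i j < 1) : Summable (fun k : ℕ => M ^ k) := by
  let := Matrix.linftyOpNormedRing (n := ι) (α := ℝ)
  let := Matrix.linftyOpNormedAlgebra (R := ℝ) (n := ι) (α := ℝ)
  have : CompleteSpace (Matrix ι ι ℝ) := FiniteDimensional.complete ℝ _
  -- the `L∞` operator norm of `Mᵀ` is the largest column sum of `M`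
  have hnorm : ‖Mᵀ‖ < 1 := by
    rw [linfty_opNorm_def, ← NNReal.coe_one, NNReal.coe_lt_coe, Finset.sup_lt_iff one_pos]
    intro j _
    rw [← NNReal.coe_lt_coe]
    simpa [Real.norm_of_nonneg (hM _ j)] using hcol j
  simpa [← transpose_pow] using (summable_geometric_of_norm_lt_one hnorm).matrix_transpose

lemma isUnit_one_sub_and_inv_nonneg_of_sum_col_lt_one {M : Matrix ι ι ℝ}
    (hM : ∀ i j, 0 ≤ M i j) (hcol : ∀ j, ∑ i, M i j < 1) :
    IsUnit (1 - M) ∧ ∀ i j, 0 ≤ (1 - M)⁻¹ i j := by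
  have hsum := summable_pow_of_sum_col_lt_one hM hcol
  have hinv : (1 - M) * ∑' k, M ^ k = 1 := hsum.one_sub_mul_tsum_pow
  refine ⟨(isUnit_iff_isUnit_det _).2 (isUnit_det_of_right_inverse hinv), fun i j => ?_⟩
  rw [inv_eq_right_inv hinv]
  exact (Pi.hasSum.1 (Pi.hasSum.1 hsum.hasSum i) j).nonneg fun k => pow_apply_nonneg hM k i j

end Matrix

section Kronecker

variable {n : ℕ}

lemma kronVecId_mulVec (u w : Fin n → ℝ) : kronVecId u *ᵥ w = kron u w := by
  funext p
  simp [kronVecId, mulVec, dotProduct, kron]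

lemma idKronVec_mulVec (u w : Fin n → ℝ) : idKronVec u *ᵥ w = kron w u := by
  funext p
  simp [idKronVec, mulVec, dotProduct, kron, mul_comm]

lemma kron_nonneg {u w : Fin n → ℝ} (hu : 0 ≤ u) (hw : 0 ≤ w) : 0 ≤ kron u w :=
  fun p => mul_nonneg (hu p.1) (hw p.2)

lemma sum_kron (u w : Fin n → ℝ) : ∑ p, kron u w p = (∑ i, u i) * ∑ j, w j := by
  simp [kron, Fintype.sum_prod_type, ← sum_mul, ← mul_sum]

lemma kronVecId_add_idKronVec_nonneg {u : Fin n → ℝ} (hu : 0 ≤ u) (p : Fin n × Fin n)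
    (k : Fin n) : 0 ≤ (kronVecId u + idKronVec u) p k := by
  simp only [Matrix.add_apply, kronVecId, idKronVec, of_apply]
  exact add_nonneg (mul_nonneg (hu _) (ite_nonneg zero_le_one le_rfl))
    (mul_nonneg (ite_nonneg zero_le_one le_rfl) (hu _))

lemma sum_kronVecId_add_idKronVec_apply (u : Fin n → ℝ) (k : Fin n) :
    ∑ p, (kronVecId u + idKronVec u) p k = 2 * ∑ i, u i := by
  simp [kronVecId, idKronVec, Fintype.sum_prod_type, sum_add_distrib]
  ring

end Kronecker

section Newton

variable {n : ℕ} {α : ℝ} {R : Matrix (Fin n) (Fin n × Fin n) ℝ} {v : Fin n → ℝ}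

lemma Fprime_mulVec (x d : Fin n → ℝ) :
    Fprime α R x *ᵥ d = d - α • R *ᵥ (kron x d + kron d x) := by
  rw [Fprime, sub_mulVec, one_mulVec, smul_mulVec, ← mulVec_mulVec, add_mulVec,
    kronVecId_mulVec, idKronVec_mulVec]

lemma Fmap_add (b x d : Fin n → ℝ) :
    Fmap α R v (x + d) = Fmap α R v x + Fprime α R b *ᵥ d
      - α • R *ᵥ (kron (x - b) d + kron d (x - b) + kron d d) := by
  have hkron : kron (x + d) (x + d)
      = kron x x + (kron b d + kron d b) + (kron (x - b) d + kron d (x - b) + kron d d) := by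
    funext p
    simp only [kron, Pi.add_apply, Pi.sub_apply]
    ring
  rw [Fmap, Fmap, Fprime_mulVec, hkron, mulVec_add, mulVec_add]
  module

lemma sum_Fmap (hRcol : ∀ p, ∑ i, R i p = 1) (hv1 : ∑ i, v i = 1) (x : Fin n → ℝ) :
    ∑ i, Fmap α R v x i = ∑ i, x i - α * (∑ i, x i) ^ 2 - (1 - α) := by
  simp only [Fmap, Pi.sub_apply, Pi.smul_apply, smul_eq_mul, sum_sub_distrib, ← mul_sum,
    Matrix.sum_mulVec_of_sum_col_eq_one hRcol, sum_kron, hv1]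
  ring

lemma sum_Fprime_mulVec (hRcol : ∀ p, ∑ i, R i p = 1) (b d : Fin n → ℝ) :
    ∑ i, (Fprime α R b *ᵥ d) i = (1 - 2 * α * ∑ i, b i) * ∑ i, d i := by
  simp only [Fprime_mulVec, Pi.sub_apply, Pi.smul_apply, smul_eq_mul, sum_sub_distrib,
    ← mul_sum, Matrix.sum_mulVec_of_sum_col_eq_one hRcol, Pi.add_apply, sum_add_distrib,
    sum_kron]
  ring

lemma Fprime_isUnit_and_inv_nonneg (hα0 : 0 ≤ α) (hα : α < 1 / 2) (hR0 : ∀ i p, 0 ≤ R i p)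
    (hRcol : ∀ p, ∑ i, R i p = 1) {b : Fin n → ℝ} (hb0 : 0 ≤ b) (hb1 : ∑ i, b i ≤ 1) :
    IsUnit (Fprime α R b) ∧ ∀ i j, 0 ≤ (Fprime α R b)⁻¹ i j := by
  refine Matrix.isUnit_one_sub_and_inv_nonneg_of_sum_col_lt_one (fun i j => ?_) fun j => ?_
  · simp only [Matrix.smul_apply, mul_apply, smul_eq_mul]
    exact mul_nonneg hα0 (sum_nonneg fun p _ =>
      mul_nonneg (hR0 i p) (kronVecId_add_idKronVec_nonneg hb0 p j))
  · simp only [Matrix.smul_apply, smul_eq_mul, ← mul_sum,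
      Matrix.sum_mul_apply_of_sum_col_eq_one hRcol, sum_kronVecId_add_idKronVec_apply]
    nlinarith

def IsAdmissible (α : ℝ) (R : Matrix (Fin n) (Fin n × Fin n) ℝ) (v x : Fin n → ℝ) : Prop :=
  Fmap α R v x ≤ 0 ∧ 0 ≤ x ∧ ∑ i, x i ≤ 1

lemma Fmap_add_nonpos (hα0 : 0 ≤ α) (hR0 : ∀ i p, 0 ≤ R i p) {b x d : Fin n → ℝ}
    (hbx : b ≤ x) (hd : 0 ≤ d) (hstep : Fprime α R b *ᵥ d = -Fmap α R v x) :
    Fmap α R v (x + d) ≤ 0 := by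
  have hxb : 0 ≤ x - b := sub_nonneg.2 hbx
  have hquad : 0 ≤ R *ᵥ (kron (x - b) d + kron d (x - b) + kron d d) :=
    Matrix.mulVec_nonneg hR0 <| add_nonneg (add_nonneg (kron_nonneg hxb hd)
      (kron_nonneg hd hxb)) (kron_nonneg hd hd)
  rw [Fmap_add b, hstep, add_neg_cancel, zero_sub, neg_nonpos]
  exact smul_nonneg hα0 hquad

lemma sum_add_le_one (hα0 : 0 ≤ α) (hα : α < 1 / 2) (hRcol : ∀ p, ∑ i, R i p = 1)
    (hv1 : ∑ i, v i = 1) {b x d : Fin n → ℝ} (hb0 : 0 ≤ b) (hbx : b ≤ x)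
    (hx1 : ∑ i, x i ≤ 1) (hstep : Fprime α R b *ᵥ d = -Fmap α R v x) :
    ∑ i, (x + d) i ≤ 1 := by
  have hsum : (1 - 2 * α * ∑ i, b i) * ∑ i, d i
      = -(∑ i, x i - α * (∑ i, x i) ^ 2 - (1 - α)) := by
    rw [← sum_Fprime_mulVec hRcol, hstep, ← sum_Fmap hRcol hv1, ← sum_neg_distrib]
    rfl
  set β := ∑ i, b i
  set t := ∑ i, x i
  have hβ0 : 0 ≤ β := sum_nonneg fun i _ => hb0 i
  have hβt : β ≤ t := sum_le_sum fun i _ => hbx i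
  have hpos : 0 < 1 - 2 * α * β := by nlinarith
  have hkey : (1 - 2 * α * β) * (1 - t - ∑ i, d i) = α * (1 - t) * (1 + t - 2 * β) := by
    linear_combination -hsum
  have hgap : 0 ≤ 1 - t - ∑ i, d i := (mul_nonneg_iff_of_pos_left hpos).1 <| hkey ▸
    mul_nonneg (mul_nonneg hα0 (sub_nonneg.2 hx1)) (by linarith)
  rw [Pi.add_def, sum_add_distrib]
  linarith

lemma le_mnStep_and_isAdmissible (hα0 : 0 ≤ α) (hα : α < 1 / 2) (hR0 : ∀ i p, 0 ≤ R i p)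
    (hRcol : ∀ p, ∑ i, R i p = 1) (hv1 : ∑ i, v i = 1) {b x : Fin n → ℝ} (hb0 : 0 ≤ b)
    (hb1 : ∑ i, b i ≤ 1) (hbx : b ≤ x) (hx : IsAdmissible α R v x) :
    x ≤ mnStep α R v b x ∧ IsAdmissible α R v (mnStep α R v b x) := by
  obtain ⟨hFx, hx0, hx1⟩ := hx
  obtain ⟨hunit, hinv⟩ := Fprime_isUnit_and_inv_nonneg hα0 hα hR0 hRcol hb0 hb1
  set d := (Fprime α R b)⁻¹ *ᵥ -Fmap α R v x
  have hd : 0 ≤ d := Matrix.mulVec_nonneg hinv (neg_nonneg.2 hFx)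
  have hstep : Fprime α R b *ᵥ d = -Fmap α R v x := by
    rw [mulVec_mulVec, mul_nonsing_inv _ ((isUnit_iff_isUnit_det _).1 hunit), one_mulVec]
  have hxd : mnStep α R v b x = x + d := by
    rw [mnStep, sub_eq_add_neg, ← mulVec_neg]
  have hle : x ≤ x + d := le_add_of_nonneg_right hd
  rw [hxd]
  exact ⟨hle, Fmap_add_nonpos hα0 hR0 hbx hd hstep, hx0.trans hle,
    sum_add_le_one hα0 hα hRcol hv1 hb0 hbx hx1 hstep⟩

variable (hα0 : 0 ≤ α) (hα : α < 1 / 2) (hR0 : ∀ i p, 0 ≤ R i p)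
  (hRcol : ∀ p, ∑ i, R i p = 1) (hv1 : ∑ i, v i = 1)
include hα0 hα hR0 hRcol hv1

lemma le_iterate_mnStep_and_isAdmissible {b : Fin n → ℝ} (hb : IsAdmissible α R v b)
    (s : ℕ) : b ≤ (mnStep α R v b)^[s] b ∧ IsAdmissible α R v ((mnStep α R v b)^[s] b) := by
  induction s with
  | zero => exact ⟨le_rfl, hb⟩
  | succ s ih =>
    rw [Function.iterate_succ_apply']
    have := le_mnStep_and_isAdmissible hα0 hα hR0 hRcol hv1 hb.2.1 hb.2.2 ih.1 ih.2
    exact ⟨ih.1.trans this.1, this.2⟩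

lemma iterate_mnStep_le_succ {b : Fin n → ℝ} (hb : IsAdmissible α R v b) (s : ℕ) :
    (mnStep α R v b)^[s] b ≤ (mnStep α R v b)^[s + 1] b := by
  obtain ⟨hbx, hx⟩ := le_iterate_mnStep_and_isAdmissible hα0 hα hR0 hRcol hv1 hb s
  rw [Function.iterate_succ_apply']
  exact (le_mnStep_and_isAdmissible hα0 hα hR0 hRcol hv1 hb.2.1 hb.2.2 hbx hx).1

lemma isAdmissible_mnOuter {ni : ℕ → ℕ} {x0 : Fin n → ℝ} (hx0 : IsAdmissible α R v x0)
    (k : ℕ) : IsAdmissible α R v (mnOuter α R v ni x0 k) := by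
  induction k with
  | zero => exact hx0
  | succ k ih => exact (le_iterate_mnStep_and_isAdmissible hα0 hα hR0 hRcol hv1 ih _).2

end Newton

theorem stmt13_general {n : ℕ} (α : ℝ) (hα0 : 0 < α) (hα : α < 1 / 2)
    (R : Matrix (Fin n) (Fin n × Fin n) ℝ) (hR0 : ∀ i p, 0 ≤ R i p)
    (hRcol : ∀ p, ∑ i, R i p = 1)
    (v : Fin n → ℝ) (hv1 : ∑ i, v i = 1)
    (ni : ℕ → ℕ)
    (x0 : Fin n → ℝ) (hFx0 : Fmap α R v x0 ≤ 0) (hx00 : 0 ≤ x0)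
    (hx01 : ∑ i, x0 i ≤ 1) :
    (∀ i, IsUnit (Fprime α R (mnOuter α R v ni x0 i))) ∧
    (∀ i s, s ≤ ni i →
      Fmap α R v (mnIter α R v ni x0 i s) ≤ 0 ∧
      0 ≤ mnIter α R v ni x0 i s ∧
      ∑ j, mnIter α R v ni x0 i s j ≤ 1) ∧
    (∀ i s, 1 ≤ s → s ≤ ni i →
      mnIter α R v ni x0 i (s - 1) ≤ mnIter α R v ni x0 i s) ∧
    (∀ k, mnOuter α R v ni x0 k ≤ mnOuter α R v ni x0 (k + 1)) := by
  have houter := isAdmissible_mnOuter hα0.le hα hR0 hRcol hv1 (ni := ni) ⟨hFx0, hx00, hx01⟩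
  refine ⟨fun i => ?_, fun i s _ => ?_, fun i s hs _ => ?_, fun k => ?_⟩
  · exact (Fprime_isUnit_and_inv_nonneg hα0.le hα hR0 hRcol (houter i).2.1 (houter i).2.2).1
  · exact (le_iterate_mnStep_and_isAdmissible hα0.le hα hR0 hRcol hv1 (houter i) s).2
  · obtain ⟨s, rfl⟩ := Nat.exists_eq_add_of_le' hs
    exact iterate_mnStep_le_succ hα0.le hα hR0 hRcol hv1 (houter i) s
  · exact (le_iterate_mnStep_and_isAdmissible hα0.le hα hR0 hRcol hv1 (houter k) (ni k)).1

theorem stmt13 {n : ℕ} (hn : 1 ≤ n) (α : ℝ) (hα0 : 0 < α) (hα : α < 1 / 2)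
    (R : Matrix (Fin n) (Fin n × Fin n) ℝ) (hR0 : ∀ i p, 0 ≤ R i p)
    (hRcol : ∀ p, ∑ i, R i p = 1)
    (v : Fin n → ℝ) (hv0 : 0 ≤ v) (hv1 : ∑ i, v i = 1)
    (ni : ℕ → ℕ) (hni : ∀ i, 1 ≤ ni i)
    (x0 : Fin n → ℝ) (hFx0 : Fmap α R v x0 ≤ 0) (hx00 : 0 ≤ x0)
    (hx01 : ∑ i, x0 i ≤ 1) :
    (∀ i, IsUnit (Fprime α R (mnOuter α R v ni x0 i))) ∧
    (∀ i s, s ≤ ni i →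
      Fmap α R v (mnIter α R v ni x0 i s) ≤ 0 ∧
      0 ≤ mnIter α R v ni x0 i s ∧
      ∑ j, mnIter α R v ni x0 i s j ≤ 1) ∧
    (∀ i s, 1 ≤ s → s ≤ ni i →
      mnIter α R v ni x0 i (s - 1) ≤ mnIter α R v ni x0 i s) ∧
    (∀ k, mnOuter α R v ni x0 k ≤ mnOuter α R v ni x0 (k + 1)) :=
  stmt13_general α hα0 hα R hR0 hRcol v hv1 ni x0 hFx0 hx00 hx01
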